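/- arXiv:2010.14198 — 4 statements merged into one kernel-verified Lean document; each statement's English description precedes it below -/
import Mathlib

section
/- Let r_1 \geq \cdots \geq r_n > 0 with r_1 r_n = 1, and let f(x) = (\sum_{k=1}^n r_k/(x^2+r_k)^2)^{1/2}. Then \sqrt{n}\, r_n \leq (1/\pi)\int_{-\infty}^\infty f(x)\,dx \leq \sqrt{n}\, r_1. -/
/-!
Every summand `r k / (x ^ 2 + r k) ^ 2` lies between `t / (x ^ 2 + s) ^ 2` and
`s / (x ^ 2 + t) ^ 2`, where `t = r_n ≤ r k ≤ r_1 = s`, so `f` is squeezed between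
`√(n t) / (x ^ 2 + s)` and `√(n s) / (x ^ 2 + t)`. Since `∫ (x ^ 2 + c)⁻¹ = π / √c`, this gives
`π √(n t / s) ≤ ∫ f ≤ π √(n s / t)`, and `s t = 1` turns `s / t` into `s ^ 2` and `t / s` into `t ^ 2`.
-/

open MeasureTheory Real

lemma inv_sq_add_eq {c : ℝ} (hc : 0 < c) (x : ℝ) :
    (x ^ 2 + c)⁻¹ = c⁻¹ * (1 + ((√c)⁻¹ * x) ^ 2)⁻¹ := by
  have hsc : 0 < √c := sqrt_pos.2 hc
  field_simp
  rw [sq_sqrt hc.le]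
  ring

lemma integrable_inv_sq_add {c : ℝ} (hc : 0 < c) :
    Integrable fun x : ℝ => (x ^ 2 + c)⁻¹ := by
  simp_rw [inv_sq_add_eq hc]
  exact (integrable_inv_one_add_sq.comp_mul_left' (by positivity)).const_mul _

lemma integral_inv_sq_add {c : ℝ} (hc : 0 < c) :
    ∫ x : ℝ, (x ^ 2 + c)⁻¹ = π / √c := by
  have hsc : 0 < √c := sqrt_pos.2 hc
  simp_rw [inv_sq_add_eq hc]
  rw [integral_const_mul, Measure.integral_comp_mul_left (fun y : ℝ => (1 + y ^ 2)⁻¹),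
    integral_univ_inv_one_add_sq, inv_inv, abs_of_pos hsc, smul_eq_mul]
  field_simp
  rw [sq_sqrt hc.le]

section Squeeze

variable {a b c : ℝ}

lemma div_sq_le_of_mem_Icc (ha : 0 < a) (hc : c ∈ Set.Icc a b) (x : ℝ) :
    c / (x ^ 2 + c) ^ 2 ≤ b / (x ^ 2 + a) ^ 2 := by
  have : 0 < b := ha.trans_le (hc.1.trans hc.2)
  gcongr
  exacts [hc.2, hc.1]

lemma le_div_sq_of_mem_Icc (ha : 0 < a) (hc : c ∈ Set.Icc a b) (x : ℝ) :
    a / (x ^ 2 + b) ^ 2 ≤ c / (x ^ 2 + c) ^ 2 := by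
  have : 0 < c := ha.trans_le hc.1
  gcongr
  exacts [hc.1, hc.2]

variable {ι : Type*} [Fintype ι] {r : ι → ℝ}

lemma sqrt_sum_le (ha : 0 < a) (hr : ∀ k, r k ∈ Set.Icc a b) (x : ℝ) :
    √(∑ k, r k / (x ^ 2 + r k) ^ 2) ≤ √(Fintype.card ι * b) * (x ^ 2 + a)⁻¹ := by
  have hsum : ∑ k, r k / (x ^ 2 + r k) ^ 2 ≤ Fintype.card ι * b / (x ^ 2 + a) ^ 2 := by
    calc ∑ k, r k / (x ^ 2 + r k) ^ 2 ≤ ∑ _k : ι, b / (x ^ 2 + a) ^ 2 :=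
          Finset.sum_le_sum fun k _ => div_sq_le_of_mem_Icc ha (hr k) x
      _ = Fintype.card ι * b / (x ^ 2 + a) ^ 2 := by
          rw [Finset.sum_const, Finset.card_univ, nsmul_eq_mul, mul_div_assoc]
  calc √(∑ k, r k / (x ^ 2 + r k) ^ 2) ≤ √(Fintype.card ι * b / (x ^ 2 + a) ^ 2) :=
        sqrt_le_sqrt hsum
    _ = √(Fintype.card ι * b) * (x ^ 2 + a)⁻¹ := by
        rw [sqrt_div' _ (by positivity), sqrt_sq (by positivity), div_eq_mul_inv]

lemma le_sqrt_sum [Nonempty ι] (ha : 0 < a) (hr : ∀ k, r k ∈ Set.Icc a b) (x : ℝ) :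
    √(Fintype.card ι * a) * (x ^ 2 + b)⁻¹ ≤ √(∑ k, r k / (x ^ 2 + r k) ^ 2) := by
  have hsum : Fintype.card ι * a / (x ^ 2 + b) ^ 2 ≤ ∑ k, r k / (x ^ 2 + r k) ^ 2 := by
    calc Fintype.card ι * a / (x ^ 2 + b) ^ 2 = ∑ _k : ι, a / (x ^ 2 + b) ^ 2 := by
          rw [Finset.sum_const, Finset.card_univ, nsmul_eq_mul, mul_div_assoc]
      _ ≤ ∑ k, r k / (x ^ 2 + r k) ^ 2 :=
          Finset.sum_le_sum fun k _ => le_div_sq_of_mem_Icc ha (hr k) x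
  obtain ⟨k₀⟩ := ‹Nonempty ι›
  have hb : 0 < b := ha.trans_le ((hr k₀).1.trans (hr k₀).2)
  calc √(Fintype.card ι * a) * (x ^ 2 + b)⁻¹ = √(Fintype.card ι * a / (x ^ 2 + b) ^ 2) := by
        rw [sqrt_div' _ (by positivity), sqrt_sq (by positivity), div_eq_mul_inv]
    _ ≤ √(∑ k, r k / (x ^ 2 + r k) ^ 2) := sqrt_le_sqrt hsum

lemma continuous_sqrt_sum (hr : ∀ k, 0 < r k) :
    Continuous fun x : ℝ => √(∑ k, r k / (x ^ 2 + r k) ^ 2) := by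
  refine (continuous_finsetSum _ fun k _ => continuous_const.div (by fun_prop) fun x => ?_).sqrt
  have := hr k
  positivity

lemma integrable_sqrt_sum (ha : 0 < a) (hr : ∀ k, r k ∈ Set.Icc a b) :
    Integrable fun x : ℝ => √(∑ k, r k / (x ^ 2 + r k) ^ 2) := by
  refine ((integrable_inv_sq_add ha).const_mul √(Fintype.card ι * b)).mono
    (continuous_sqrt_sum fun k => ha.trans_le (hr k).1).aestronglyMeasurable
    (Filter.Eventually.of_forall fun x => ?_)
  rw [norm_of_nonneg (sqrt_nonneg _), norm_of_nonneg (by positivity)]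
  exact sqrt_sum_le ha hr x

lemma integral_sqrt_sum_le (ha : 0 < a) (hr : ∀ k, r k ∈ Set.Icc a b) :
    ∫ x : ℝ, √(∑ k, r k / (x ^ 2 + r k) ^ 2) ≤ π * √(Fintype.card ι * b / a) :=
  calc ∫ x : ℝ, √(∑ k, r k / (x ^ 2 + r k) ^ 2)
      ≤ ∫ x : ℝ, √(Fintype.card ι * b) * (x ^ 2 + a)⁻¹ :=
        integral_mono (integrable_sqrt_sum ha hr) ((integrable_inv_sq_add ha).const_mul _)
          (sqrt_sum_le ha hr)
    _ = π * √(Fintype.card ι * b / a) := by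
        rw [integral_const_mul, integral_inv_sq_add ha, sqrt_div' _ ha.le]
        ring

lemma le_integral_sqrt_sum [Nonempty ι] (ha : 0 < a) (hr : ∀ k, r k ∈ Set.Icc a b) :
    π * √(Fintype.card ι * a / b) ≤ ∫ x : ℝ, √(∑ k, r k / (x ^ 2 + r k) ^ 2) := by
  obtain ⟨k₀⟩ := ‹Nonempty ι›
  have hb : 0 < b := ha.trans_le ((hr k₀).1.trans (hr k₀).2)
  calc π * √(Fintype.card ι * a / b) = ∫ x : ℝ, √(Fintype.card ι * a) * (x ^ 2 + b)⁻¹ := by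
        rw [integral_const_mul, integral_inv_sq_add hb, sqrt_div' _ hb.le]
        ring
    _ ≤ ∫ x : ℝ, √(∑ k, r k / (x ^ 2 + r k) ^ 2) :=
        integral_mono ((integrable_inv_sq_add hb).const_mul _) (integrable_sqrt_sum ha hr)
          (le_sqrt_sum ha hr)

end Squeeze

theorem integral_density_bounds
    (n : ℕ) (hn : 0 < n) (r : Fin n → ℝ) (hr : ∀ k, 0 < r k)
    (hmono : ∀ k l : Fin n, k ≤ l → r l ≤ r k)
    (hprod : r ⟨0, hn⟩ * r ⟨n - 1, by omega⟩ = 1)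
    (f : ℝ → ℝ)
    (hf : f = fun x => Real.sqrt (∑ k : Fin n, r k / (x ^ 2 + r k) ^ 2)) :
    Real.sqrt n * r ⟨n - 1, by omega⟩ ≤ (1 / Real.pi) * ∫ x : ℝ, f x ∧
    (1 / Real.pi) * (∫ x : ℝ, f x) ≤ Real.sqrt n * r ⟨0, hn⟩ := by
  subst hf
  set s := r ⟨0, hn⟩
  set t := r ⟨n - 1, by omega⟩
  have hs : 0 < s := hr _
  have ht : 0 < t := hr _
  have : Nonempty (Fin n) := ⟨⟨0, hn⟩⟩
  have hbounds : ∀ k, r k ∈ Set.Icc t s := fun k =>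
    ⟨hmono k _ (Fin.mk_le_mk.2 (by omega)), hmono _ k (Fin.mk_le_mk.2 (Nat.zero_le _))⟩
  have hst : s / t = s ^ 2 := by
    rw [div_eq_iff ht.ne']
    linear_combination -s * hprod
  have hts : t / s = t ^ 2 := by
    rw [div_eq_iff hs.ne']
    linear_combination -t * hprod
  have hupper := integral_sqrt_sum_le ht hbounds
  have hlower := le_integral_sqrt_sum ht hbounds
  rw [Fintype.card_fin, mul_div_assoc, hst, sqrt_mul (Nat.cast_nonneg _), sqrt_sq hs.le] at hupper
  rw [Fintype.card_fin, mul_div_assoc, hts, sqrt_mul (Nat.cast_nonneg _), sqrt_sq ht.le] at hlower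
  simp only [one_div_mul_eq_div, le_div_iff₀ pi_pos, div_le_iff₀ pi_pos]
  constructor <;> linarith
end

section
/- Jensen's inequality for zeros: let f be an entire function, 0 < r < R, and suppose f(0) \neq 0. Then the number N_f(r) of zeros of f (with multiplicity) in the closed disk of radius r satisfies N_f(r) \leq \log(M_R/M_r) / \log((R^2+r^2)/(2Rr)), where M_t = \max_{|z| \leq t} |f(z)|. -/
/-!
Factor `f = (∏ a ∈ Z, (z - a) ^ m a) * g` with `g` entire and replace each factor `z - a` by
`R² - conj a * z`. Since
`‖R² - conj a * z‖² = R² ‖z - a‖² + (R² - ‖a‖²) (R² - ‖z‖²)`,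
the new factor has modulus `R ‖z - a‖` on the circle `‖z‖ = R`, so by the maximum modulus
principle `‖g * ∏ (R² - conj a * z) ^ m a‖ ≤ R ^ N * M_R` on the disk of radius `R`; and for
`‖a‖, ‖z‖ ≤ r` the same identity gives `(R² + r²) ‖z - a‖ ≤ 2 r ‖R² - conj a * z‖`. At a point of
the disk of radius `r` where `‖f‖ = M_r` this yields `M_r (R² + r²) ^ N ≤ M_R (2 R r) ^ N`.
-/

open Complex Metric
open scoped ComplexConjugate

lemma Finset.prod_mul_pow_eq {ι M : Type*} [CommMonoid M] (s : Finset ι) (c : M) (x : ι → M)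
    (m : ι → ℕ) :
    ∏ i ∈ s, (c * x i) ^ m i = c ^ (∑ i ∈ s, m i) * ∏ i ∈ s, x i ^ m i := by
  simp only [mul_pow, Finset.prod_mul_distrib, Finset.prod_pow_eq_pow_sum]

lemma norm_ofReal_sub_conj_mul_sq (ρ : ℝ) (a z : ℂ) :
    ‖(ρ : ℂ) - conj a * z‖ ^ 2 = ρ * ‖z - a‖ ^ 2 + (ρ - ‖a‖ ^ 2) * (ρ - ‖z‖ ^ 2) := by
  simp only [← normSq_eq_norm_sq, normSq_apply, sub_re, sub_im, mul_re, mul_im, conj_re, conj_im,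
    ofReal_re, ofReal_im]
  ring

lemma norm_ofReal_sq_sub_conj_mul_of_norm_eq {R : ℝ} (hR : 0 ≤ R) {z : ℂ} (hz : ‖z‖ = R) (a : ℂ) :
    ‖(R : ℂ) ^ 2 - conj a * z‖ = R * ‖z - a‖ := by
  have h := norm_ofReal_sub_conj_mul_sq (R ^ 2) a z
  rw [hz, sub_self, mul_zero, add_zero] at h
  push_cast at h
  rw [← sq_eq_sq₀ (norm_nonneg _) (by positivity), h]
  ring

lemma mul_norm_sub_le_mul_norm_ofReal_sq_sub_conj_mul {r R : ℝ} (hrR : r ≤ R) {a z : ℂ}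
    (ha : ‖a‖ ≤ r) (hz : ‖z‖ ≤ r) :
    (R ^ 2 + r ^ 2) * ‖z - a‖ ≤ 2 * r * ‖(R : ℂ) ^ 2 - conj a * z‖ := by
  have hr : 0 ≤ r := (norm_nonneg a).trans ha
  have hRr : 0 ≤ R ^ 2 - r ^ 2 := by nlinarith
  have ha' : R ^ 2 - r ^ 2 ≤ R ^ 2 - ‖a‖ ^ 2 := by gcongr
  have hz' : R ^ 2 - r ^ 2 ≤ R ^ 2 - ‖z‖ ^ 2 := by gcongr
  have hd : ‖z - a‖ ^ 2 ≤ (2 * r) ^ 2 := by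
    gcongr; linarith [norm_sub_le z a]
  have hP : (R ^ 2 - r ^ 2) ^ 2 ≤ (R ^ 2 - ‖a‖ ^ 2) * (R ^ 2 - ‖z‖ ^ 2) := by
    rw [sq]; exact mul_le_mul ha' hz' hRr (hRr.trans ha')
  have hid := norm_ofReal_sub_conj_mul_sq (R ^ 2) a z
  push_cast at hid
  rw [← pow_le_pow_iff_left₀ (by positivity) (by positivity) two_ne_zero, mul_pow, mul_pow, hid]
  linear_combination mul_le_mul hP hd (by positivity) ((sq_nonneg _).trans hP)

theorem Differentiable.exists_eq_pow_mul {f : ℂ → ℂ} (hf : Differentiable ℂ f) {a : ℂ} {n : ℕ}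
    (hn : (n : ℕ∞) ≤ analyticOrderAt f a) :
    ∃ g : ℂ → ℂ, Differentiable ℂ g ∧ ∀ z, f z = (z - a) ^ n * g z := by
  induction n generalizing f with
  | zero => exact ⟨f, hf, by simp⟩
  | succ n ih =>
    have hfa : f a = 0 :=
      apply_eq_zero_of_analyticOrderAt_ne_zero (ne_bot_of_le_ne_bot (by simp) hn)
    have hslope : Differentiable ℂ (dslope f a) := by
      simpa only [← differentiableOn_univ] using
        (Complex.differentiableOn_dslope Filter.univ_mem).2 hf.differentiableOn
    have hf_eq : f = (· - a) * dslope f a := by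
      ext z; simpa [hfa] using (sub_smul_dslope f a z).symm
    have horder : analyticOrderAt f a = 1 + analyticOrderAt (dslope f a) a := by
      rw [hf_eq, analyticOrderAt_mul (by fun_prop) (hslope.analyticAt a),
        analyticOrderAt_id_sub_const_self, ← hf_eq]
    obtain ⟨g, hg, hfg⟩ := ih hslope (by
      rw [horder, Nat.cast_succ, add_comm] at hn
      exact (ENat.add_le_add_iff_left ENat.one_ne_top).1 hn)
    refine ⟨g, hg, fun z => ?_⟩
    rw [hf_eq, Pi.mul_apply, hfg]
    ring

theorem Differentiable.exists_eq_prod_pow_mul {f : ℂ → ℂ} (hf : Differentiable ℂ f) (Z : Finset ℂ)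
    (m : ℂ → ℕ) (hm : ∀ a ∈ Z, (m a : ℕ∞) ≤ analyticOrderAt f a) :
    ∃ g : ℂ → ℂ, Differentiable ℂ g ∧ ∀ z, f z = (∏ a ∈ Z, (z - a) ^ m a) * g z := by
  classical
  induction Z using Finset.induction_on with
  | empty => exact ⟨f, hf, by simp⟩
  | insert a Z ha ih =>
    obtain ⟨g, hg, hfg⟩ := ih fun b hb => hm b (Finset.mem_insert_of_mem hb)
    have hP : AnalyticAt ℂ (fun z => ∏ b ∈ Z, (z - b) ^ m b) a := by fun_prop
    have hPa : ∏ b ∈ Z, (a - b) ^ m b ≠ 0 :=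
      Finset.prod_ne_zero_iff.2 fun b hb =>
        pow_ne_zero _ (sub_ne_zero.2 (ne_of_mem_of_not_mem hb ha).symm)
    have horder : analyticOrderAt g a = analyticOrderAt f a := by
      rw [show f = (fun z => ∏ b ∈ Z, (z - b) ^ m b) * g from funext hfg,
        analyticOrderAt_mul hP (hg.analyticAt a), hP.analyticOrderAt_eq_zero.2 hPa, zero_add]
    obtain ⟨g', hg', hgg'⟩ := hg.exists_eq_pow_mul (horder ▸ hm a (Finset.mem_insert_self a Z))
    refine ⟨g', hg', fun z => ?_⟩
    rw [hfg, hgg', Finset.prod_insert ha]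
    ring

theorem Differentiable.norm_mul_pow_le {f : ℂ → ℂ} (hf : Differentiable ℂ f) {r R M : ℝ}
    (hr : 0 ≤ r) (hrR : r < R) (Z : Finset ℂ) (hZ : ∀ a ∈ Z, ‖a‖ ≤ r) (m : ℂ → ℕ)
    (hm : ∀ a ∈ Z, (m a : ℕ∞) ≤ analyticOrderAt f a) (hM : ∀ w ∈ sphere (0 : ℂ) R, ‖f w‖ ≤ M)
    {z : ℂ} (hz : ‖z‖ ≤ r) :
    ‖f z‖ * (R ^ 2 + r ^ 2) ^ (∑ a ∈ Z, m a) ≤ M * (2 * R * r) ^ (∑ a ∈ Z, m a) := by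
  have hR : 0 < R := hr.trans_lt hrR
  obtain ⟨g, hg, hfg⟩ := hf.exists_eq_prod_pow_mul Z m hm
  set B : ℂ → ℂ := fun z => ∏ a ∈ Z, ((R : ℂ) ^ 2 - conj a * z) ^ m a
  have hnorm_f : ∀ w, ‖f w‖ = (∏ a ∈ Z, ‖w - a‖ ^ m a) * ‖g w‖ := by
    simp [hfg, norm_prod]
  have hnorm_B : ∀ w, ‖B w‖ = ∏ a ∈ Z, ‖(R : ℂ) ^ 2 - conj a * w‖ ^ m a := by
    simp [B, norm_prod]
  have hmax : ‖g z * B z‖ ≤ R ^ (∑ a ∈ Z, m a) * M := by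
    refine Complex.norm_le_of_forall_mem_frontier_norm_le (isBounded_ball (x := 0) (r := R))
      (hg.mul (by fun_prop)).diffContOnCl (fun w hw => ?_) ?_
    · rw [frontier_ball 0 hR.ne'] at hw
      have hw' : ‖w‖ = R := by simpa using hw
      rw [Pi.mul_apply, norm_mul, hnorm_B, Finset.prod_congr rfl fun a _ => by
        rw [norm_ofReal_sq_sub_conj_mul_of_norm_eq hR.le hw' a], Finset.prod_mul_pow_eq, mul_comm,
        mul_assoc, ← hnorm_f]
      gcongr
      exact hM w hw
    · rw [closure_ball 0 hR.ne']
      exact closedBall_subset_closedBall hrR.le (by simpa using hz)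
  have hB : (R ^ 2 + r ^ 2) ^ (∑ a ∈ Z, m a) * ∏ a ∈ Z, ‖z - a‖ ^ m a ≤
      (2 * r) ^ (∑ a ∈ Z, m a) * ‖B z‖ := by
    rw [hnorm_B, ← Finset.prod_mul_pow_eq, ← Finset.prod_mul_pow_eq]
    refine Finset.prod_le_prod (fun a _ => by positivity) fun a ha => ?_
    exact pow_le_pow_left₀ (by positivity)
      (mul_norm_sub_le_mul_norm_ofReal_sq_sub_conj_mul hrR.le (hZ a ha) hz) _
  calc ‖f z‖ * (R ^ 2 + r ^ 2) ^ (∑ a ∈ Z, m a)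
      = ‖g z‖ * ((R ^ 2 + r ^ 2) ^ (∑ a ∈ Z, m a) * ∏ a ∈ Z, ‖z - a‖ ^ m a) := by
        rw [hnorm_f]; ring
    _ ≤ ‖g z‖ * ((2 * r) ^ (∑ a ∈ Z, m a) * ‖B z‖) := by gcongr
    _ = (2 * r) ^ (∑ a ∈ Z, m a) * ‖g z * B z‖ := by rw [norm_mul]; ring
    _ ≤ (2 * r) ^ (∑ a ∈ Z, m a) * (R ^ (∑ a ∈ Z, m a) * M) := by gcongr
    _ = M * (2 * R * r) ^ (∑ a ∈ Z, m a) := by ring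

lemma natCast_le_log_div_div_log_div {n : ℕ} {a b x y : ℝ} (hb : 0 < b) (hba : b < a) (hx : 0 < x)
    (h : x * a ^ n ≤ y * b ^ n) : (n : ℝ) ≤ Real.log (y / x) / Real.log (a / b) := by
  have hab : 1 < a / b := (one_lt_div hb).2 hba
  have hpow : (a / b) ^ n ≤ y / x := by
    rw [div_pow, div_le_div_iff₀ (by positivity) hx]
    linarith
  rw [le_div_iff₀ (Real.log_pos hab), ← Real.log_pow]
  exact Real.log_le_log (by positivity) hpow

theorem jensen_inequality_for_zeros
    (f : ℂ → ℂ) (hf : Differentiable ℂ f) (h0 : f 0 ≠ 0)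
    (r R : ℝ) (hr : 0 < r) (hrR : r < R)
    (Z : Finset ℂ)
    (hZ : (Z : Set ℂ) = {z : ℂ | z ∈ Metric.closedBall (0 : ℂ) r ∧ f z = 0})
    (N : ℕ) (hN : N = ∑ z ∈ Z, (analyticOrderAt f z).toNat)
    (Mr MR : ℝ)
    (hMr : IsGreatest ((fun z => ‖f z‖) '' Metric.closedBall (0 : ℂ) r) Mr)
    (hMR : IsGreatest ((fun z => ‖f z‖) '' Metric.closedBall (0 : ℂ) R) MR) :
    (N : ℝ) ≤ Real.log (MR / Mr) / Real.log ((R ^ 2 + r ^ 2) / (2 * R * r)) := by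
  have hR : 0 < R := hr.trans hrR
  have hZr : ∀ a ∈ Z, ‖a‖ ≤ r := fun a ha => by
    simpa using (Set.ext_iff.1 hZ a).1 ha |>.1
  have hM : ∀ w ∈ sphere (0 : ℂ) R, ‖f w‖ ≤ MR := fun w hw =>
    hMR.2 ⟨w, sphere_subset_closedBall hw, rfl⟩
  obtain ⟨z₀, hz₀, rfl⟩ := hMr.1
  have hMr_pos : 0 < ‖f z₀‖ := (norm_pos_iff.2 h0).trans_le (hMr.2 ⟨0, by simpa using hr.le, rfl⟩)
  have key := hf.norm_mul_pow_le hr.le hrR Z hZr (fun a => (analyticOrderAt f a).toNat)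
    (fun a _ => ENat.natCast_toNat_le_self _) hM (z := z₀) (by simpa using hz₀)
  rw [← hN] at key
  refine natCast_le_log_div_div_log_div (by positivity) ?_ hMr_pos key
  nlinarith [sq_pos_of_pos (sub_pos.2 hrR)]
end

section
/- Let g : \mathbb{R} \to \mathbb{R} be continuous with \int_{\mathbb{R}} |g(x)|(x^2+|x|+1)\,dx < \infty and suppose |g(x)| x^4 is bounded. Then for sequences K_n \to \infty, l_n/\sqrt{K_n} \to \infty, m_n/\sqrt{K_n} \to \infty of positive reals (with l_n, m_n integers), (1/\sqrt{K_n}) \sum_{i=-l_n}^{m_n} g(i/\sqrt{K_n}) \to \int_{\mathbb{R}} g(x)\,dx as n \to \infty. -/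
/-!
With `c = √K`, the Riemann sum is exactly the integral over `((-l - 1)/c, m/c]` of the step
function `x ↦ g (⌈x c⌉ / c)`, which converges pointwise to `g` as `c → ∞` by continuity.
Since `⌈x c⌉ / c` lies within `1/c ≤ 1` of `x`, continuity and the decay `|g x| x⁴ = O(1)` yield
an integrable majorant `C / (1 + x²)` for all these step functions, and dominated convergence gives
the limit.
-/

open Filter MeasureTheory Set Topology

section StepFunction

variable (f : ℤ → ℝ) {c : ℝ}

lemma ceil_mul_eq_on_Ioc (hc : 0 < c) (i : ℤ) :
    EqOn (fun x : ℝ => f ⌈x * c⌉) (fun _ => f i) (Ioc ((i - 1) / c) (i / c)) := by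
  rintro x ⟨hlo, hhi⟩
  rw [div_lt_iff₀ hc] at hlo
  rw [le_div_iff₀ hc] at hhi
  simp only [Int.ceil_eq_iff.2 ⟨hlo, hhi⟩]

lemma integrableOn_ceil_mul_Ioc (hc : 0 < c) (i : ℤ) :
    IntegrableOn (fun x : ℝ => f ⌈x * c⌉) (Ioc ((i - 1) / c) (i / c)) :=
  (integrableOn_const measure_Ioc_lt_top.ne).congr_fun (ceil_mul_eq_on_Ioc f hc i).symm
    measurableSet_Ioc

lemma setIntegral_ceil_mul_Ioc (hc : 0 < c) (i : ℤ) :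
    ∫ x in Ioc ((i - 1) / c) (i / c), f ⌈x * c⌉ = f i / c := by
  rw [setIntegral_congr_fun measurableSet_Ioc (ceil_mul_eq_on_Ioc f hc i), setIntegral_const,
    Measure.real, Real.volume_Ioc, smul_eq_mul, ← sub_div, sub_sub_cancel,
    ENNReal.toReal_ofReal (by positivity)]
  ring

lemma setIntegral_ceil_mul_eq_sum (hc : 0 < c) {a b : ℤ} (hab : a ≤ b + 1) :
    ∫ x in Ioc ((a - 1) / c) (b / c), f ⌈x * c⌉ = (∑ i ∈ Finset.Icc a b, f i) / c := by
  suffices IntegrableOn (fun x : ℝ => f ⌈x * c⌉) (Ioc ((a - 1) / c) (b / c)) ∧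
      ∫ x in Ioc ((a - 1) / c) (b / c), f ⌈x * c⌉ = (∑ i ∈ Finset.Icc a b, f i) / c from this.2
  replace hab : a - 1 ≤ b := by omega
  induction b, hab using Int.leInduction with
  | base => simp
  | succ b hb ih =>
    obtain ⟨hint, hval⟩ := ih
    have hpiece := integrableOn_ceil_mul_Ioc f hc (b + 1)
    have hpiece_val := setIntegral_ceil_mul_Ioc f hc (b + 1)
    push_cast at hpiece hpiece_val ⊢
    rw [add_sub_cancel_right] at hpiece hpiece_val
    have hmono : ((a : ℝ) - 1) / c ≤ b / c := by gcongr; exact_mod_cast hb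
    have hsplit := Ioc_union_Ioc_eq_Ioc hmono (by gcongr; linarith : (b : ℝ) / c ≤ (b + 1) / c)
    refine ⟨hsplit ▸ hint.union hpiece, ?_⟩
    rw [← hsplit, setIntegral_union (Ioc_disjoint_Ioc_of_le le_rfl) measurableSet_Ioc hint hpiece,
      ← Finset.insert_Icc_right_eq_Icc_add_one (by omega), Finset.sum_insert (by simp), hval,
      hpiece_val]
    ring

end StepFunction

lemma le_ceil_mul_div {c : ℝ} (hc : 0 < c) (x : ℝ) : x ≤ ⌈x * c⌉ / c :=
  (le_div_iff₀ hc).2 (Int.le_ceil _)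

lemma ceil_mul_div_le {c : ℝ} (hc : 0 < c) (x : ℝ) : ⌈x * c⌉ / c ≤ x + c⁻¹ := by
  rw [div_le_iff₀ hc, add_mul, inv_mul_cancel₀ hc.ne']
  exact (Int.ceil_lt_add_one _).le

lemma tendsto_ceil_mul_div_atTop (x : ℝ) :
    Tendsto (fun c : ℝ => ⌈x * c⌉ / c) atTop (𝓝 x) := by
  have hupper : Tendsto (fun c : ℝ => x + c⁻¹) atTop (𝓝 x) := by
    simpa using tendsto_inv_atTop_zero.const_add x
  refine tendsto_of_tendsto_of_tendsto_of_le_of_le' tendsto_const_nhds hupper ?_ ?_ <;>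
    filter_upwards [eventually_gt_atTop 0] with c hc
  exacts [le_ceil_mul_div hc x, ceil_mul_div_le hc x]

lemma one_add_sq_le_of_abs_sub_le_one {x y : ℝ} (h : |x - y| ≤ 1) :
    1 + x ^ 2 ≤ 3 * (1 + y ^ 2) := by
  have : (x - y) ^ 2 ≤ 1 := (sq_le_one_iff_abs_le_one _).2 h
  nlinarith [sq_nonneg (x - 2 * y)]

lemma exists_abs_mul_one_add_sq_le {g : ℝ → ℝ} (hg : Continuous g) {M : ℝ}
    (hM : ∀ x, |g x| * x ^ 4 ≤ M) : ∃ C, ∀ x, |g x| * (1 + x ^ 2) ≤ C := by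
  obtain ⟨M₀, hM₀⟩ := (isCompact_Icc (a := (-1 : ℝ)) (b := 1)).exists_bound_of_continuousOn
    hg.continuousOn
  refine ⟨2 * max M₀ M, fun x => ?_⟩
  rcases le_or_gt |x| 1 with hx | hx
  · have hgx : |g x| ≤ M₀ := hM₀ x (abs_le.1 hx)
    have : x ^ 2 ≤ 1 := (sq_le_one_iff_abs_le_one _).2 hx
    nlinarith [abs_nonneg (g x), le_max_left M₀ M]
  · have hx2 : 1 ≤ x ^ 2 := (one_le_sq_iff_one_le_abs _).2 hx.le
    have : x ^ 2 ≤ x ^ 4 := by nlinarith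
    nlinarith [abs_nonneg (g x), le_max_right M₀ M, hM x]

lemma abs_le_of_abs_sub_le_one {g : ℝ → ℝ} {C : ℝ} (hC : ∀ x, |g x| * (1 + x ^ 2) ≤ C)
    {x y : ℝ} (h : |y - x| ≤ 1) : |g y| ≤ 3 * C * (1 + x ^ 2)⁻¹ := by
  have hy : |g y| ≤ C / (1 + y ^ 2) := (le_div_iff₀ (by positivity)).2 (hC y)
  have hC0 : 0 ≤ C := (mul_nonneg (abs_nonneg _) (by positivity)).trans (hC 0)
  calc |g y| ≤ C / (1 + y ^ 2) := hy
    _ ≤ 3 * C * (1 + x ^ 2)⁻¹ := by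
      rw [← div_eq_mul_inv, div_le_div_iff₀ (by positivity) (by positivity)]
      nlinarith [mul_le_mul_of_nonneg_left
        (one_add_sq_le_of_abs_sub_le_one ((abs_sub_comm x y).trans_le h)) hC0]

lemma tendsto_setIntegral_ceil_mul_div {g : ℝ → ℝ} (hg : Continuous g) {C : ℝ}
    (hC : ∀ x, |g x| * (1 + x ^ 2) ≤ C) {ι : Type*} {L : Filter ι} [L.IsCountablyGenerated]
    {c a b : ι → ℝ} (hc : Tendsto c L atTop) (ha : Tendsto a L atBot) (hb : Tendsto b L atTop) :
    Tendsto (fun n => ∫ x in Ioc (a n) (b n), g (⌈x * c n⌉ / c n)) L (𝓝 (∫ x, g x)) := by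
  simp_rw [← integral_indicator measurableSet_Ioc]
  refine tendsto_integral_filter_of_dominated_convergence (fun x => 3 * C * (1 + x ^ 2)⁻¹)
    (Eventually.of_forall fun n =>
      ((by fun_prop : Measurable fun x => g (⌈x * c n⌉ / c n)).indicator
        measurableSet_Ioc).aestronglyMeasurable) ?_
    (integrable_inv_one_add_sq.const_mul _) (ae_of_all _ fun x => ?_)
  · filter_upwards [hc.eventually_ge_atTop 1] with n hn
    refine ae_of_all _ fun x => ?_
    have hcn : 0 < c n := by linarith
    have hstep : |⌈x * c n⌉ / c n - x| ≤ 1 := by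
      rw [abs_sub_le_iff]
      constructor <;> linarith [le_ceil_mul_div hcn x, ceil_mul_div_le hcn x,
        inv_le_one_of_one_le₀ hn]
    exact (norm_indicator_le_norm_self _ _).trans (abs_le_of_abs_sub_le_one hC hstep)
  · have hmem : ∀ᶠ n in L, x ∈ Ioc (a n) (b n) :=
      (ha.eventually_lt_atBot x).and (hb.eventually_ge_atTop x)
    refine ((hg.tendsto x).comp ((tendsto_ceil_mul_div_atTop x).comp hc)).congr' ?_
    filter_upwards [hmem] with n hn
    rw [indicator_of_mem hn]
    rfl

theorem riemann_sum_limit_general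
    (g : ℝ → ℝ) (hg : Continuous g)
    (hbdd : ∃ Mb : ℝ, ∀ x : ℝ, |g x| * x ^ 4 ≤ Mb)
    (K : ℕ → ℝ) (l m : ℕ → ℕ)
    (hK : Tendsto K atTop atTop)
    (hl : Tendsto (fun n => (l n : ℝ) / Real.sqrt (K n)) atTop atTop)
    (hm : Tendsto (fun n => (m n : ℝ) / Real.sqrt (K n)) atTop atTop) :
    Tendsto
      (fun n => (1 / Real.sqrt (K n)) *
        ∑ i ∈ Finset.Icc (-(l n : ℤ)) (m n : ℤ), g ((i : ℝ) / Real.sqrt (K n)))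
      atTop (nhds (∫ x : ℝ, g x)) := by
  obtain ⟨Mb, hMb⟩ := hbdd
  obtain ⟨C, hC⟩ := exists_abs_mul_one_add_sq_le hg hMb
  set c : ℕ → ℝ := fun n => Real.sqrt (K n)
  have hc : Tendsto c atTop atTop := Real.tendsto_sqrt_atTop.comp hK
  have hlower : Tendsto (fun n => (-(l n : ℝ) - 1) / c n) atTop atBot := by
    refine tendsto_atBot_mono' _ ?_ (tendsto_neg_atTop_atBot.comp hl)
    filter_upwards [hc.eventually_gt_atTop 0] with n hn
    rw [Function.comp_apply, ← neg_div]
    gcongr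
    linarith
  refine (tendsto_setIntegral_ceil_mul_div hg hC hc hlower hm).congr' ?_
  filter_upwards [hc.eventually_gt_atTop 0] with n hn
  have hsum := setIntegral_ceil_mul_eq_sum (fun i => g (i / c n)) hn
    (by omega : -(l n : ℤ) ≤ m n + 1)
  push_cast at hsum
  rw [hsum, one_div_mul_eq_div]

theorem riemann_sum_limit
    (g : ℝ → ℝ) (hg : Continuous g)
    (hint : MeasureTheory.Integrable (fun x => |g x| * (x ^ 2 + |x| + 1)))
    (hbdd : ∃ Mb : ℝ, ∀ x : ℝ, |g x| * x ^ 4 ≤ Mb)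
    (K : ℕ → ℝ) (hKpos : ∀ n, 0 < K n) (l m : ℕ → ℕ)
    (hK : Tendsto K atTop atTop)
    (hl : Tendsto (fun n => (l n : ℝ) / Real.sqrt (K n)) atTop atTop)
    (hm : Tendsto (fun n => (m n : ℝ) / Real.sqrt (K n)) atTop atTop) :
    Tendsto
      (fun n => (1 / Real.sqrt (K n)) *
        ∑ i ∈ Finset.Icc (-(l n : ℤ)) (m n : ℤ), g ((i : ℝ) / Real.sqrt (K n)))
      atTop (nhds (∫ x : ℝ, g x)) :=
  riemann_sum_limit_general g hg hbdd K l m hK hl hm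
end

section
/- Vandermonde-type identity with real parameters: for \alpha, \beta > -1 and n a natural number, \sum_{i=0}^n \binom{n+\alpha}{n-i}\binom{n+\beta}{i} = \binom{2n+\alpha+\beta}{n}. -/
/-- Generalized binomial coefficient `z choose k` for real `z`. -/
noncomputable def genBinom (z : ℝ) (k : ℕ) : ℝ :=
  (∏ j ∈ Finset.range k, (z - j)) / (Nat.factorial k)

lemma descPochhammer_smeval_real (z : ℝ) (k : ℕ) :
    (descPochhammer ℤ k).smeval z = ∏ j ∈ Finset.range k, (z - j) := by
  induction k with
  | zero => simp [descPochhammer_zero, Polynomial.smeval_one]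
  | succ n ih =>
    rw [descPochhammer_succ_right, Polynomial.smeval_mul, ih, Finset.prod_range_succ,
      Polynomial.smeval_sub, Polynomial.smeval_X, Polynomial.smeval_natCast]
    simp

lemma genBinom_eq_choose (z : ℝ) (k : ℕ) : genBinom z k = Ring.choose z k := by
  have h := Ring.descPochhammer_eq_factorial_smul_choose z k
  rw [descPochhammer_smeval_real, nsmul_eq_mul] at h
  rw [genBinom, h, mul_div_cancel_left₀]
  exact_mod_cast Nat.factorial_ne_zero k

theorem vandermonde_real (n : ℕ) (α β : ℝ) (hα : -1 < α) (hβ : -1 < β) :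
    ∑ i ∈ Finset.range (n + 1),
        genBinom ((n : ℝ) + α) (n - i) * genBinom ((n : ℝ) + β) i
      = genBinom (2 * (n : ℝ) + α + β) n := by
  simp only [genBinom_eq_choose]
  have h2 : (2 * (n : ℝ) + α + β) = ((n : ℝ) + α) + ((n : ℝ) + β) := by ring
  rw [h2, Ring.add_choose_eq n (Commute.all _ _),
    Finset.Nat.sum_antidiagonal_eq_sum_range_succ
      (fun a b => Ring.choose ((n : ℝ) + α) a * Ring.choose ((n : ℝ) + β) b) n,
    ← Finset.sum_range_reflect]
  refine Finset.sum_congr rfl fun i hi => ?_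
  rw [Finset.mem_range, Nat.lt_succ_iff] at hi
  have : n + 1 - 1 - i = n - i := by omega
  rw [this, Nat.sub_sub_self hi]
end
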